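/- Let C be a category with finite colimits and N ⊆ C a subcategory closed under cobase change that contains all isomorphisms. Let F : X → Y be a natural transformation of diagrams indexed by a cofinite poset I which is a cospecial N-map. Then F is a levelwise N-map, i.e., each component X_t → Y_t lies in N. -/

import Mathlib

open CategoryTheory Limits

universe w v u

namespace Paper

variable {C : Type u} [Category.{v} C]

/-- A poset is *cofinite* if every principal downset is finite. -/
def CofinitePoset (I : Type w) [PartialOrder I] : Prop :=
  ∀ t : I, {s : I | s ≤ t}.Finite

variable {I : Type w} [PartialOrder I]

/-- The inclusion of the (strictly) below-`t` part of a poset. -/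
def belowIncl (t : I) : {s : I // s < t} ⥤ I :=
  Monotone.functor (f := fun s => s.1) (fun _ _ h => h)

/-- A natural transformation `F : X ⟶ Y` of diagrams indexed by a cofinite poset `I` is a
*cospecial `N`-map* if for every `t : I` the natural map
`X_t ⊔_{colim_{s<t} X_s} colim_{s<t} Y_s ⟶ Y_t` lies in `N`.  We express this using
(existing) colimit cocones `cX`, `cY` of the restrictions of `X` and `Y` to `{s | s < t}`,
the canonical comparison maps `a : cX.pt ⟶ X_t`, `b : cX.pt ⟶ cY.pt`, `e : cY.pt ⟶ Y_t`
(characterized by their compatibilities with the cocone legs), a pushout of `a` along `b`,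
and the induced map `k` to `Y_t`. -/
def IsCospecial (N : MorphismProperty C) {X Y : I ⥤ C} (F : X ⟶ Y) : Prop :=
  ∀ t : I,
    ∃ (cX : Cocone (belowIncl t ⋙ X)) (cY : Cocone (belowIncl t ⋙ Y)),
      Nonempty (IsColimit cX) ∧ Nonempty (IsColimit cY) ∧
      ∃ (a : cX.pt ⟶ X.obj t) (b : cX.pt ⟶ cY.pt) (e : cY.pt ⟶ Y.obj t),
        (∀ s : {s : I // s < t},
          cX.ι.app s ≫ a = X.map (homOfLE s.2.le) ∧
          cX.ι.app s ≫ b = F.app s.1 ≫ cY.ι.app s ∧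
          cY.ι.app s ≫ e = Y.map (homOfLE s.2.le)) ∧
        ∃ (P : C) (inl : X.obj t ⟶ P) (inr : cY.pt ⟶ P) (k : P ⟶ Y.obj t),
          IsPushout a b inl inr ∧ inl ≫ k = F.app t ∧ inr ≫ k = e ∧ N k

end Paper

open Paper

/-!
`F_t` factors as `X_t ⟶ X_t ⊔_{L_t X} L_t Y ⟶ Y_t`, where `L_t` is the colimit over `{s | s < t}`:
the second map lies in `N` by cospeciality and the first is a cobase change of `L_t X ⟶ L_t Y`.
So it suffices that `colim_S X ⟶ colim_S Y` lies in `N` for every finite lower set `S`, which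
follows by induction on `|S|`. For `m` maximal in `S`, `colim_S Z` is the pushout of
`Z_m ⟵ L_m Z ⟶ colim_{S ∖ {m}} Z`, and a map between two pushouts factors as a cobase change of
the map on one leg followed by a cobase change of the relative map
`X_m ⊔_{L_m X} L_m Y ⟶ Y_m` on the other.
-/

namespace CategoryTheory.MorphismProperty

variable {C : Type u} [Category.{v} C] {N : MorphismProperty C}

theorem of_isPushout_induced [HasPushouts C] [N.IsStableUnderCobaseChange]
    [N.IsStableUnderComposition] {B A D Q B' A' D' Q' P : C}
    {a : B ⟶ A} {ℓ : B ⟶ D} {i : A ⟶ Q} {r : D ⟶ Q} (sq : IsPushout a ℓ i r)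
    {a' : B' ⟶ A'} {ℓ' : B' ⟶ D'} {i' : A' ⟶ Q'} {r' : D' ⟶ Q'} (sq' : IsPushout a' ℓ' i' r')
    {fB : B ⟶ B'} {fA : A ⟶ A'} {fD : D ⟶ D'} {fQ : Q ⟶ Q'}
    (hℓ : ℓ ≫ fD = fB ≫ ℓ') (hi : i ≫ fQ = fA ≫ i') (hr : r ≫ fQ = fD ≫ r')
    {inl : A ⟶ P} {inr : B' ⟶ P} (hP : IsPushout a fB inl inr) {k : P ⟶ A'}
    (hkA : inl ≫ k = fA) (hka : inr ≫ k = a') (hD : N fD) (hk : N k) : N fQ := by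
  obtain ⟨Q₂, q, j, hD'⟩ : ∃ (Q₂ : C) (q : D' ⟶ Q₂) (j : Q ⟶ Q₂), IsPushout fD r q j :=
    ⟨_, _, _, .of_hasPushout fD r⟩
  have hlower : IsPushout a (fB ≫ ℓ') (i ≫ j) q := hℓ ▸ sq.paste_vert hD'.flip
  obtain ⟨p, hmid, hp⟩ : ∃ p, IsPushout inr ℓ' p q ∧ inl ≫ p = i ≫ j :=
    ⟨_, hlower.of_top' hP, hP.inl_desc _ _ _⟩
  obtain ⟨h, hupper, hh⟩ : ∃ h, IsPushout k p i' h ∧ q ≫ h = r' :=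
    ⟨_, (hka ▸ sq').of_left' hmid, hmid.inr_desc _ _ _⟩
  convert N.comp_mem j h (N.of_isPushout hD'.flip hD) (N.of_isPushout hupper.flip hk) using 1
  apply sq.hom_ext
  · rw [hi, ← hkA, Category.assoc, hupper.w, reassoc_of% hp]
  · rw [hr, ← hD'.w_assoc, hh]

theorem map_mem_of_isEmpty [N.ContainsIdentities] [N.RespectsIso] {J : Type*} [Category J]
    [IsEmpty J] {X Y : J ⥤ C} (α : X ⟶ Y) {cX : Cocone X} {cY : Cocone Y}
    (hX : IsColimit cX) (hY : IsColimit cY) : N (hX.map cY α) := by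
  have (j : J) : IsIso (α.app j) := isEmptyElim j
  have := NatIso.isIso_of_isIso_app α
  rw [← asIso_hom α, ← hX.coconePointsIsoOfNatIso_hom hY]
  exact N.of_isIso _

end CategoryTheory.MorphismProperty

lemma IsLowerSet.mem_sdiff_of_lt {I : Type w} [PartialOrder I] {S : Set I} {m : I}
    (hS : IsLowerSet S) (hm : m ∈ S) : ∀ s < m, s ∈ S \ {m} :=
  fun _ hs => ⟨hS.Iio_subset hm hs, hs.ne⟩

namespace Paper

variable {C : Type u} [Category.{v} C] {I : Type w} [PartialOrder I]

abbrev setIncl (S : Set I) : S ⥤ I := (Subtype.mono_coe (· ∈ S)).functor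

section Restriction

variable {Z : I ⥤ C} {T : Set I}

def Cocone.restrict {S : Set I} (h : S ⊆ T) (c : Cocone (setIncl T ⋙ Z)) :
    Cocone (setIncl S ⋙ Z) where
  pt := c.pt
  ι :=
    { app s := c.ι.app ⟨s, h s.2⟩
      naturality s s' f :=
        (c.w (homOfLE (leOfHom f) : (⟨s, h s.2⟩ : T) ⟶ ⟨s', h s'.2⟩)).trans
          (Category.comp_id _).symm }

-- `belowIncl m` agrees with `setIncl {s | s < m}` only after unfolding, hence a separate
-- restriction landing in cocones over `belowIncl m`.
def Cocone.restrictBelow {m : I} (h : ∀ s < m, s ∈ T) (c : Cocone (setIncl T ⋙ Z)) :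
    Cocone (belowIncl m ⋙ Z) where
  pt := c.pt
  ι :=
    { app s := c.ι.app ⟨s, h s s.2⟩
      naturality s s' f :=
        (c.w (homOfLE (leOfHom f) : (⟨s, h s s.2⟩ : T) ⟶ ⟨s', h s' s'.2⟩)).trans
          (Category.comp_id _).symm }

variable {X Y : I ⥤ C} (F : X ⟶ Y)

theorem desc_restrict_comp_map {S : Set I} (h : S ⊆ T)
    {cXS : Cocone (setIncl S ⋙ X)} {cYS : Cocone (setIncl S ⋙ Y)}
    (hXS : IsColimit cXS) (hYS : IsColimit cYS)
    {cXT : Cocone (setIncl T ⋙ X)} (cYT : Cocone (setIncl T ⋙ Y)) (hXT : IsColimit cXT) :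
    hXS.desc (Cocone.restrict h cXT) ≫ hXT.map cYT (Functor.whiskerLeft (setIncl T) F) =
      hXS.map cYS (Functor.whiskerLeft (setIncl S) F) ≫ hYS.desc (Cocone.restrict h cYT) :=
  hXS.hom_ext fun s => by
    erw [hXS.fac_assoc, hXT.ι_map, hXS.ι_map_assoc, hYS.fac]
    rfl

theorem desc_restrictBelow_comp_map {m : I} (h : ∀ s < m, s ∈ T)
    {cXm : Cocone (belowIncl m ⋙ X)} {cYm : Cocone (belowIncl m ⋙ Y)}
    (hXm : IsColimit cXm) (hYm : IsColimit cYm)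
    {cXT : Cocone (setIncl T ⋙ X)} (cYT : Cocone (setIncl T ⋙ Y)) (hXT : IsColimit cXT)
    {b : cXm.pt ⟶ cYm.pt} (hb : ∀ s, cXm.ι.app s ≫ b = F.app s.1 ≫ cYm.ι.app s) :
    hXm.desc (Cocone.restrictBelow h cXT) ≫ hXT.map cYT (Functor.whiskerLeft (setIncl T) F) =
      b ≫ hYm.desc (Cocone.restrictBelow h cYT) :=
  hXm.hom_ext fun s => by
    erw [hXm.fac_assoc, hXT.ι_map, reassoc_of% hb s, Category.assoc, hYm.fac]
    rfl

end Restriction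

section Glue

variable {Z : I ⥤ C} {S : Set I} {m : I} {c : Cocone (setIncl (S \ {m}) ⋙ Z)}
  {u : Z.obj m ⟶ c.pt}

variable (c u) in
open scoped Classical in
noncomputable def glueLeg (s : S) : Z.obj s ⟶ c.pt :=
  if h : (s : I) ≤ m then Z.map (homOfLE h) ≫ u else c.ι.app ⟨s, s.2, fun e => h e.le⟩

lemma glueLeg_of_le (s : S) (h : s.1 ≤ m) : glueLeg c u s = Z.map (homOfLE h) ≫ u :=
  dif_pos h

lemma glueLeg_of_ne
    (hu : ∀ (s : ↑(S \ {m})) (hs : s.1 < m), Z.map (homOfLE hs.le) ≫ u = c.ι.app s)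
    (s : S) (h : s.1 ≠ m) : glueLeg c u s = c.ι.app ⟨s, s.2, h⟩ := by
  by_cases hle : s.1 ≤ m
  · rw [glueLeg_of_le s hle]
    exact hu ⟨s, s.2, h⟩ (hle.lt_of_ne h)
  · exact dif_neg hle

@[simps]
noncomputable def glueCocone (hm : Maximal (· ∈ S) m)
    (hu : ∀ (s : ↑(S \ {m})) (hs : s.1 < m), Z.map (homOfLE hs.le) ≫ u = c.ι.app s) :
    Cocone (setIncl S ⋙ Z) where
  pt := c.pt
  ι :=
    { app := glueLeg c u
      naturality x y f := by
        have hxy : x.1 ≤ y.1 := leOfHom f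
        refine Eq.trans ?_ (Category.comp_id _).symm
        change Z.map (homOfLE hxy) ≫ glueLeg c u y = glueLeg c u x
        by_cases hy : y.1 ≤ m
        · rw [glueLeg_of_le y hy, glueLeg_of_le x (hxy.trans hy), ← Category.assoc,
            ← Z.map_comp]
          rfl
        · have hxm : x.1 ≠ m := fun e => hy (hm.2 y.2 (e ▸ hxy))
          rw [glueLeg_of_ne hu y fun e => hy e.le, glueLeg_of_ne hu x hxm]
          exact c.w (homOfLE hxy : (⟨x, x.2, hxm⟩ : ↑(S \ {m})) ⟶ ⟨y, y.2, fun e => hy e.le⟩) }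

theorem isPushout_of_maximal (hS : IsLowerSet S) (hm : Maximal (· ∈ S) m)
    {cm : Cocone (belowIncl m ⋙ Z)} (hcm : IsColimit cm)
    {c' : Cocone (setIncl (S \ {m}) ⋙ Z)} (hc' : IsColimit c')
    {c : Cocone (setIncl S ⋙ Z)} (hc : IsColimit c)
    {a : cm.pt ⟶ Z.obj m} (ha : ∀ s, cm.ι.app s ≫ a = Z.map (homOfLE s.2.le)) :
    IsPushout a (hcm.desc (Cocone.restrictBelow (hS.mem_sdiff_of_lt hm.prop) c'))
      (c.ι.app ⟨m, hm.prop⟩) (hc'.desc (Cocone.restrict Set.sdiff_subset c)) := by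
  set ℓ := hcm.desc (Cocone.restrictBelow (hS.mem_sdiff_of_lt hm.prop) c')
  set r := hc'.desc (Cocone.restrict Set.sdiff_subset c)
  have hℓ (s : {s // s < m}) : cm.ι.app s ≫ ℓ = c'.ι.app ⟨s, hS s.2.le hm.prop, s.2.ne⟩ :=
    hcm.fac _ s
  have hr (s : ↑(S \ {m})) : c'.ι.app s ≫ r = c.ι.app ⟨s, s.2.1⟩ := hc'.fac _ s
  have compat {W : C} (u : Z.obj m ⟶ W) (v : c'.pt ⟶ W) (huv : a ≫ u = ℓ ≫ v)
      (s : ↑(S \ {m})) (hs : s.1 < m) : Z.map (homOfLE hs.le) ≫ u = (c'.extend v).ι.app s :=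
    ((reassoc_of% (ha ⟨s, hs⟩)) u).symm.trans
      ((cm.ι.app ⟨s, hs⟩ ≫= huv).trans ((reassoc_of% (hℓ ⟨s, hs⟩)) v))
  refine IsPushout.of_isColimit' ⟨?_⟩ (PushoutCocone.IsColimit.mk _
    (fun s => hc.desc (glueCocone (c := c'.extend s.inr) hm (compat s.inl s.inr s.condition)))
    ?_ ?_ ?_)
  · refine hcm.hom_ext fun s => ?_
    erw [reassoc_of% ha s, reassoc_of% hℓ s, hr]
    exact c.w (homOfLE s.2.le : (⟨s, hS s.2.le hm.prop⟩ : S) ⟶ ⟨m, hm.prop⟩)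
  · intro s
    erw [hc.fac, glueCocone_ι_app, glueLeg_of_le _ le_rfl]
    simp
  · intro s
    refine hc'.hom_ext fun x => ?_
    erw [reassoc_of% hr x, hc.fac, glueCocone_ι_app,
      glueLeg_of_ne (c := c'.extend s.inr) (compat _ _ s.condition) ⟨x, x.2.1⟩ x.2.2]
    rfl
  · intro s f hinl hinr
    refine hc.hom_ext fun x => ?_
    erw [hc.fac, glueCocone_ι_app]
    by_cases hx : x.1 = m
    · rw [glueLeg_of_le x hx.le, ← hinl, ← reassoc_of% c.w (homOfLE hx.le : x ⟶ ⟨m, hm.prop⟩)]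
      rfl
    · rw [glueLeg_of_ne (c := c'.extend s.inr) (compat _ _ s.condition) x hx, ← hinr]
      exact ((reassoc_of% (hr ⟨x, x.2, hx⟩)) f).symm

end Glue

theorem exists_isColimit_of_finite [HasFiniteColimits C] {S : Set I} (hS : S.Finite)
    (Z : I ⥤ C) : ∃ c : Cocone (setIncl S ⋙ Z), Nonempty (IsColimit c) :=
  have := hS.fintype
  ⟨_, ⟨colimit.isColimit _⟩⟩

theorem IsCospecial.map_mem_of_isLowerSet [HasFiniteColimits C] {N : MorphismProperty C}
    [N.IsStableUnderCobaseChange] [N.IsStableUnderComposition] [N.ContainsIdentities]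
    {X Y : I ⥤ C} {F : X ⟶ Y} (hF : IsCospecial N F) {S : Set I} (hS : S.Finite)
    (hSl : IsLowerSet S) {cX : Cocone (setIncl S ⋙ X)} {cY : Cocone (setIncl S ⋙ Y)}
    (hX : IsColimit cX) (hY : IsColimit cY) :
    N (hX.map cY (Functor.whiskerLeft (setIncl S) F)) := by
  induction hn : S.ncard using Nat.strong_induction_on generalizing S with
  | _ n ih =>
  rcases S.eq_empty_or_nonempty with rfl | hne
  · exact N.map_mem_of_isEmpty _ hX hY
  obtain ⟨m, hm⟩ := hS.exists_maximal hne
  obtain ⟨cX', ⟨hX'⟩⟩ := exists_isColimit_of_finite (hS.sdiff (t := {m})) X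
  obtain ⟨cY', ⟨hY'⟩⟩ := exists_isColimit_of_finite (hS.sdiff (t := {m})) Y
  have hb' := ih _ (hn ▸ Set.ncard_sdiff_singleton_lt_of_mem hm.prop hS) hS.sdiff
    (hSl.erase fun _ hb hmb => (hm.2 hb hmb).antisymm hmb) hX' hY' rfl
  obtain ⟨cXm, cYm, ⟨hXm⟩, ⟨hYm⟩, a, b, e, hcomp, P, inl, inr, k, hP, hkA, hka, hk⟩ := hF m
  exact N.of_isPushout_induced (isPushout_of_maximal hSl hm hXm hX' hX fun s => (hcomp s).1)
    (isPushout_of_maximal hSl hm hYm hY' hY fun s => (hcomp s).2.2)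
    (desc_restrictBelow_comp_map F _ hXm hYm cY' hX' fun s => (hcomp s).2.1)
    (hX.ι_map cY _ ⟨m, hm.prop⟩) (desc_restrict_comp_map F _ hX' hY' cY hX) hP hkA hka hb' hk

end Paper

/-- Let `C` be a category with finite colimits and `N ⊆ C` a subcategory closed
under cobase change containing all isomorphisms.  If `F : X ⟶ Y` is a cospecial `N`-map of
diagrams indexed by a cofinite poset `I`, then `F` is a levelwise `N`-map. -/
theorem stmt_9 {C : Type u} [Category.{v} C] [HasFiniteColimits C]
    (N : MorphismProperty C)
    (hN_iso : ∀ {X Y : C} (e : X ≅ Y), N e.hom)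
    (hN_comp : ∀ {X Y Z : C} (f : X ⟶ Y) (g : Y ⟶ Z), N f → N g → N (f ≫ g))
    (hN_pushout : ∀ {A B X Y : C} (n : A ⟶ B) (u : A ⟶ X) (w : B ⟶ Y) (g : X ⟶ Y),
      IsPushout n u w g → N n → N g)
    {I : Type w} [PartialOrder I] (hI : CofinitePoset I)
    {X Y : I ⥤ C} (F : X ⟶ Y) (hF : IsCospecial N F) :
    ∀ t : I, N (F.app t) := by
  have : N.IsStableUnderCobaseChange := ⟨fun sq hf => hN_pushout _ _ _ _ sq.flip hf⟩
  have : N.IsStableUnderComposition := ⟨hN_comp⟩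
  have : N.ContainsIdentities := ⟨fun X => hN_iso (Iso.refl X)⟩
  intro t
  obtain ⟨cX, cY, ⟨hX⟩, ⟨hY⟩, a, b, e, hcomp, P, inl, inr, k, hP, hkA, hka, hk⟩ := hF t
  have hb : b = hX.map cY (Functor.whiskerLeft (belowIncl t) F) :=
    hX.hom_ext fun s => (hcomp s).2.1.trans (hX.ι_map cY (Functor.whiskerLeft _ F) s).symm
  have hbN : N b := hb ▸ hF.map_mem_of_isLowerSet (S := {s | s < t})
    ((hI t).subset fun _ => le_of_lt) (isLowerSet_Iio t) hX hY
  exact hkA ▸ N.comp_mem _ _ (N.of_isPushout hP hbN) hk
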